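/- Alternative semilinear form of the Euler–Lagrange equation (Proposition A.3). Suppose φ is smooth, g > 0 and g̊ > 0 everywhere, and φ satisfies the Euler–Lagrange equation ∂_u(∂_ūφ·g^{−1/2}) + ∂_ū((∂_uφ + Ψ'(u) − (Ψ'(u))²·∂_ūφ)·g^{−1/2}) = 0. Then at every point g^{uu}·∂_u²φ + 2·g^{uū}·∂_u∂_ūφ + g^{ūū}·∂_ū²φ = R̃₀, where R̃₀ := (g̊·g)^{−1}·[ 2·(2Ψ'(u)+∂_uφ)·∂_uφ·Ψ'(u)·∂_ūφ·∂_ū²φ − (2Ψ'(u)+∂_uφ)·∂_uφ·(Ψ'(u))²·(∂_ūφ)²·∂_ū²φ + (1+3g)·Ψ'(u)·∂_ūφ·∂_ū∂_uφ + 2·Ψ'(u)·∂_uφ·(∂_ūφ)²·∂_u∂_ūφ + (2∂_uφ − Ψ'(u))·(Ψ'(u))²·(∂_ūφ)³·∂_u∂_ūφ + 2·Ψ'(u)·(∂_ūφ)³·∂_u²φ − (Ψ'(u))²·(∂_ūφ)⁴·∂_u²φ + (1 − Ψ'(u)·∂_ūφ)·Ψ''(u)·(∂_ūφ)² ]. 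-/

import Mathlib

noncomputable section

/-- partial derivative in the first variable (`∂_u`) -/
def pd1 (f : ℝ × ℝ → ℝ) (p : ℝ × ℝ) : ℝ := deriv (fun s => f (s, p.2)) p.1

/-- partial derivative in the second variable (`∂_ū`) -/
def pd2 (f : ℝ × ℝ → ℝ) (p : ℝ × ℝ) : ℝ := deriv (fun s => f (p.1, s)) p.2

/-- the determinant `g = 1 − 2∂_uφ∂_ūφ − 2Ψ'(u)∂_ūφ + (Ψ'(u))²(∂_ūφ)²` -/
def gmet (Ψ : ℝ → ℝ) (φ : ℝ × ℝ → ℝ) (p : ℝ × ℝ) : ℝ :=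
  1 - 2 * pd1 φ p * pd2 φ p - 2 * deriv Ψ p.1 * pd2 φ p
    + (deriv Ψ p.1)^2 * (pd2 φ p)^2

/-- the linear-truncation determinant `g̊ = (1 − Ψ'(u)∂_ūφ)²` -/
def gring (Ψ : ℝ → ℝ) (φ : ℝ × ℝ → ℝ) (p : ℝ × ℝ) : ℝ :=
  (1 - deriv Ψ p.1 * pd2 φ p)^2

/-- inverse metric component `g^{uu} = −(∂_ūφ)²/g` -/
def guu (Ψ : ℝ → ℝ) (φ : ℝ × ℝ → ℝ) (p : ℝ × ℝ) : ℝ :=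
  -(pd2 φ p)^2 / gmet Ψ φ p

/-- inverse metric component `g^{uū} = g^{ūu} = (−1 + Ψ'(u)∂_ūφ + ∂_uφ∂_ūφ)/g` -/
def guub (Ψ : ℝ → ℝ) (φ : ℝ × ℝ → ℝ) (p : ℝ × ℝ) : ℝ :=
  (-1 + deriv Ψ p.1 * pd2 φ p + pd1 φ p * pd2 φ p) / gmet Ψ φ p

/-- inverse metric component `g^{ūū} = −(2Ψ'(u) + ∂_uφ)∂_uφ/g` -/
def gubub (Ψ : ℝ → ℝ) (φ : ℝ × ℝ → ℝ) (p : ℝ × ℝ) : ℝ :=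
  -((2 * deriv Ψ p.1 + pd1 φ p) * pd1 φ p) / gmet Ψ φ p

/-- `g^{−1/2}` as a function of the point -/
def invSqrtg (Ψ : ℝ → ℝ) (φ : ℝ × ℝ → ℝ) (p : ℝ × ℝ) : ℝ :=
  (Real.sqrt (gmet Ψ φ p))⁻¹

/-- the Euler–Lagrange expression
`∂_u(∂_ūφ·g^{−1/2}) + ∂_ū((∂_uφ + Ψ'(u) − (Ψ'(u))²∂_ūφ)·g^{−1/2})` -/
def ELexpr (Ψ : ℝ → ℝ) (φ : ℝ × ℝ → ℝ) (p : ℝ × ℝ) : ℝ :=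
  pd1 (fun q => pd2 φ q * invSqrtg Ψ φ q) p
  + pd2 (fun q => (pd1 φ q + deriv Ψ q.1 - (deriv Ψ q.1)^2 * pd2 φ q) * invSqrtg Ψ φ q) p

/-- the Laplace–Beltrami operator `□_g φ` -/
def BoxG (Ψ : ℝ → ℝ) (φ : ℝ × ℝ → ℝ) (p : ℝ × ℝ) : ℝ :=
  invSqrtg Ψ φ p *
    (pd1 (fun q => Real.sqrt (gmet Ψ φ q) * (guu Ψ φ q * pd1 φ q + guub Ψ φ q * pd2 φ q)) p
     + pd2 (fun q => Real.sqrt (gmet Ψ φ q) * (guub Ψ φ q * pd1 φ q + gubub Ψ φ q * pd2 φ q)) p)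

/-!
Writing `N := ∂_uφ + Ψ' − Ψ'²∂_ūφ` and differentiating out the factor `g^{−1/2}`, the
Euler–Lagrange expression equals
`(2g(∂_u∂_ūφ + ∂_ū∂_uφ − Ψ'²∂_ū²φ) − (∂_ūφ·∂_u g + N·∂_ū g)) / (2g^{3/2})`,
so the equation says that this numerator vanishes. Expanding `∂_u g` and `∂_ū g` by the chain rule
and using the symmetry of second derivatives, the numerator is linear in the second derivatives of
`φ`, and the claimed identity, multiplied by `g̊·g`, is `−1/2` times it modulo the definition of `g`.
-/

section PartialDerivatives

variable {F : ℝ × ℝ → ℝ} {p : ℝ × ℝ}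

theorem hasDerivAt_pd1 (hF : DifferentiableAt ℝ F p) :
    HasDerivAt (fun s => F (s, p.2)) (pd1 F p) p.1 :=
  (hF.comp p.1 (differentiableAt_id.prodMk (differentiableAt_const p.2))).hasDerivAt

theorem hasDerivAt_pd2 (hF : DifferentiableAt ℝ F p) :
    HasDerivAt (fun t => F (p.1, t)) (pd2 F p) p.2 :=
  (hF.comp p.2 ((differentiableAt_const p.1).prodMk differentiableAt_id)).hasDerivAt

theorem pd1_eq_fderiv (hF : DifferentiableAt ℝ F p) : pd1 F p = fderiv ℝ F p (1, 0) :=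
  (hF.hasFDerivAt.comp_hasDerivAt p.1
    ((hasDerivAt_id p.1).prodMk (hasDerivAt_const p.1 p.2))).deriv

theorem pd2_eq_fderiv (hF : DifferentiableAt ℝ F p) : pd2 F p = fderiv ℝ F p (0, 1) :=
  (hF.hasFDerivAt.comp_hasDerivAt p.2
    ((hasDerivAt_const p.2 p.1).prodMk (hasDerivAt_id p.2))).deriv

theorem contDiff_pd1 {m n : WithTop ℕ∞} (hF : ContDiff ℝ n F) (hmn : m + 1 ≤ n) :
    ContDiff ℝ m (pd1 F) := by
  have hdiff : Differentiable ℝ F :=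
    (hF.of_le (le_trans le_add_self hmn)).differentiable one_ne_zero
  rw [show pd1 F = fun q => fderiv ℝ F q (1, 0) from funext fun q => pd1_eq_fderiv (hdiff q)]
  exact (hF.fderiv_right hmn).clm_apply contDiff_const

theorem contDiff_pd2 {m n : WithTop ℕ∞} (hF : ContDiff ℝ n F) (hmn : m + 1 ≤ n) :
    ContDiff ℝ m (pd2 F) := by
  have hdiff : Differentiable ℝ F :=
    (hF.of_le (le_trans le_add_self hmn)).differentiable one_ne_zero
  rw [show pd2 F = fun q => fderiv ℝ F q (0, 1) from funext fun q => pd2_eq_fderiv (hdiff q)]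
  exact (hF.fderiv_right hmn).clm_apply contDiff_const

theorem pd1_pd2_comm (hF : ContDiff ℝ 2 F) (p : ℝ × ℝ) :
    pd1 (pd2 F) p = pd2 (pd1 F) p := by
  have hdiff : Differentiable ℝ F := hF.differentiable two_ne_zero
  have hF' : ContDiff ℝ 1 (fderiv ℝ F) := hF.fderiv_right (by norm_num)
  have hF'p : DifferentiableAt ℝ (fderiv ℝ F) p := hF'.differentiable one_ne_zero p
  rw [show pd2 F = fun q => fderiv ℝ F q (0, 1) from funext fun q => pd2_eq_fderiv (hdiff q),
    show pd1 F = fun q => fderiv ℝ F q (1, 0) from funext fun q => pd1_eq_fderiv (hdiff q),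
    pd1_eq_fderiv ((hF'.clm_apply contDiff_const).differentiable one_ne_zero p),
    pd2_eq_fderiv ((hF'.clm_apply contDiff_const).differentiable one_ne_zero p),
    fderiv_clm_apply hF'p (differentiableAt_const _),
    fderiv_clm_apply hF'p (differentiableAt_const _)]
  simpa using (hF.contDiffAt.isSymmSndFDerivAt (by simp)).eq (1, 0) (0, 1)

theorem differentiable_pd1_of_contDiff_two (hF : ContDiff ℝ 2 F) : Differentiable ℝ (pd1 F) :=
  (contDiff_pd1 hF (m := 1) (by norm_num)).differentiable one_ne_zero

theorem differentiable_pd2_of_contDiff_two (hF : ContDiff ℝ 2 F) : Differentiable ℝ (pd2 F) :=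
  (contDiff_pd2 hF (m := 1) (by norm_num)).differentiable one_ne_zero

end PartialDerivatives

theorem HasDerivAt.mul_inv_sqrt {f h : ℝ → ℝ} {f' h' x : ℝ} (hf : HasDerivAt f f' x)
    (hh : HasDerivAt h h' x) (hx : 0 < h x) :
    HasDerivAt (fun s => f s * (√(h s))⁻¹)
      ((2 * h x * f' - f x * h') / (2 * h x * √(h x))) x := by
  have hs : √(h x) ≠ 0 := Real.sqrt_ne_zero'.mpr hx
  refine (hf.mul ((hh.sqrt hx.ne').inv hs)).congr_deriv ?_
  have hsq : √(h x) ^ 2 = h x := Real.sq_sqrt hx.le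
  simp only [Pi.inv_apply]
  field_simp
  linear_combination f x * h' * hsq

section EulerLagrange

variable {Ψ : ℝ → ℝ} {φ : ℝ × ℝ → ℝ}

theorem hasDerivAt_gmet_fst (hΨ : ContDiff ℝ 2 Ψ) (hφ : ContDiff ℝ 2 φ) (p : ℝ × ℝ) :
    HasDerivAt (fun s => gmet Ψ φ (s, p.2))
      (-2 * (pd1 (pd1 φ) p * pd2 φ p + pd1 φ p * pd1 (pd2 φ) p)
        - 2 * (deriv (deriv Ψ) p.1 * pd2 φ p + deriv Ψ p.1 * pd1 (pd2 φ) p)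
        + 2 * deriv Ψ p.1 * pd2 φ p * (deriv (deriv Ψ) p.1 * pd2 φ p + deriv Ψ p.1 * pd1 (pd2 φ) p))
      p.1 := by
  have ha := hasDerivAt_pd1 (differentiable_pd1_of_contDiff_two hφ p)
  have hb := hasDerivAt_pd1 (differentiable_pd2_of_contDiff_two hφ p)
  have hc := (hΨ.differentiable_deriv_two p.1).hasDerivAt
  refine ((((hasDerivAt_const p.1 1).sub ((ha.const_mul 2).mul hb)).sub
    ((hc.const_mul 2).mul hb)).add ((hc.pow 2).mul (hb.pow 2))).congr_deriv ?_
  simp only [Pi.pow_apply]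
  ring

theorem hasDerivAt_gmet_snd (hφ : ContDiff ℝ 2 φ) (p : ℝ × ℝ) :
    HasDerivAt (fun t => gmet Ψ φ (p.1, t))
      (-2 * (pd2 (pd1 φ) p * pd2 φ p + pd1 φ p * pd2 (pd2 φ) p)
        - 2 * deriv Ψ p.1 * pd2 (pd2 φ) p + 2 * deriv Ψ p.1 ^ 2 * pd2 φ p * pd2 (pd2 φ) p)
      p.2 := by
  have ha := hasDerivAt_pd2 (differentiable_pd1_of_contDiff_two hφ p)
  have hb := hasDerivAt_pd2 (differentiable_pd2_of_contDiff_two hφ p)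
  refine ((((hasDerivAt_const p.2 1).sub ((ha.const_mul 2).mul hb)).sub
    (hb.const_mul (2 * deriv Ψ p.1))).add ((hb.pow 2).const_mul (deriv Ψ p.1 ^ 2))).congr_deriv ?_
  ring

theorem ELexpr_eq_div (hφ : ContDiff ℝ 2 φ) {p : ℝ × ℝ} {gu gū : ℝ}
    (hgu : HasDerivAt (fun s => gmet Ψ φ (s, p.2)) gu p.1)
    (hgū : HasDerivAt (fun t => gmet Ψ φ (p.1, t)) gū p.2) (hg : 0 < gmet Ψ φ p) :
    ELexpr Ψ φ p =
      (2 * gmet Ψ φ p * (pd1 (pd2 φ) p + pd2 (pd1 φ) p - deriv Ψ p.1 ^ 2 * pd2 (pd2 φ) p)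
        - (pd2 φ p * gu + (pd1 φ p + deriv Ψ p.1 - deriv Ψ p.1 ^ 2 * pd2 φ p) * gū))
      / (2 * gmet Ψ φ p * √(gmet Ψ φ p)) := by
  have ha := hasDerivAt_pd2 (differentiable_pd1_of_contDiff_two hφ p)
  have hb := hasDerivAt_pd2 (differentiable_pd2_of_contDiff_two hφ p)
  have hu := (hasDerivAt_pd1 (differentiable_pd2_of_contDiff_two hφ p)).mul_inv_sqrt hgu hg
  have hN : HasDerivAt (fun t => pd1 φ (p.1, t) + deriv Ψ p.1 - deriv Ψ p.1 ^ 2 * pd2 φ (p.1, t))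
      (pd2 (pd1 φ) p - deriv Ψ p.1 ^ 2 * pd2 (pd2 φ) p) p.2 :=
    (ha.add_const _).sub (hb.const_mul _)
  rw [ELexpr, pd1, pd2]
  simp only [invSqrtg]
  rw [hu.deriv, (hN.mul_inv_sqrt hgū hg).deriv, Prod.mk.eta]
  ring

end EulerLagrange

/-- **Alternative semilinear form of the Euler–Lagrange equation (Proposition A.3).**
If `φ` is smooth with `g > 0`, `g̊ > 0` everywhere and satisfies the Euler–Lagrange equation,
then `g^{uu}∂_u²φ + 2g^{uū}∂_u∂_ūφ + g^{ūū}∂_ū²φ = R̃₀`. -/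
theorem euler_lagrange_alternative_semilinear_form
    (Ψ : ℝ → ℝ) (φ : ℝ × ℝ → ℝ)
    (hΨ : ContDiff ℝ (⊤ : ℕ∞) Ψ) (hφ : ContDiff ℝ (⊤ : ℕ∞) φ)
    (hg : ∀ p : ℝ × ℝ, 0 < gmet Ψ φ p) (hgr : ∀ p : ℝ × ℝ, 0 < gring Ψ φ p)
    (hEL : ∀ p : ℝ × ℝ, ELexpr Ψ φ p = 0) :
    ∀ p : ℝ × ℝ,
      guu Ψ φ p * pd1 (pd1 φ) p + 2 * guub Ψ φ p * pd1 (pd2 φ) p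
          + gubub Ψ φ p * pd2 (pd2 φ) p
        = (gring Ψ φ p * gmet Ψ φ p)⁻¹ *
            (2 * (2 * deriv Ψ p.1 + pd1 φ p) * pd1 φ p * deriv Ψ p.1 * pd2 φ p * pd2 (pd2 φ) p
             - (2 * deriv Ψ p.1 + pd1 φ p) * pd1 φ p * (deriv Ψ p.1)^2 * (pd2 φ p)^2
                 * pd2 (pd2 φ) p
             + (1 + 3 * gmet Ψ φ p) * deriv Ψ p.1 * pd2 φ p * pd2 (pd1 φ) p
             + 2 * deriv Ψ p.1 * pd1 φ p * (pd2 φ p)^2 * pd1 (pd2 φ) p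
             + (2 * pd1 φ p - deriv Ψ p.1) * (deriv Ψ p.1)^2 * (pd2 φ p)^3 * pd1 (pd2 φ) p
             + 2 * deriv Ψ p.1 * (pd2 φ p)^3 * pd1 (pd1 φ) p
             - (deriv Ψ p.1)^2 * (pd2 φ p)^4 * pd1 (pd1 φ) p
             + (1 - deriv Ψ p.1 * pd2 φ p) * deriv (deriv Ψ) p.1 * (pd2 φ p)^2) := by
  intro p
  have hΨ2 : ContDiff ℝ 2 Ψ := hΨ.of_le (WithTop.coe_le_coe.mpr le_top)
  have hφ2 : ContDiff ℝ 2 φ := hφ.of_le (WithTop.coe_le_coe.mpr le_top)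
  have hdiv :=
    ELexpr_eq_div hφ2 (hasDerivAt_gmet_fst hΨ2 hφ2 p) (hasDerivAt_gmet_snd hφ2 p) (hg p)
  rw [hEL p, eq_comm, div_eq_zero_iff] at hdiv
  have hred := hdiv.resolve_right (by have := hg p; positivity)
  rw [← pd1_pd2_comm hφ2 p] at hred ⊢
  have hr : 1 - deriv Ψ p.1 * pd2 φ p ≠ 0 := fun h => by simpa [gring, h] using hgr p
  have hg0 := (hg p).ne'
  have hgdef : gmet Ψ φ p = 1 - 2 * pd1 φ p * pd2 φ p - 2 * deriv Ψ p.1 * pd2 φ p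
      + deriv Ψ p.1 ^ 2 * pd2 φ p ^ 2 := rfl
  simp only [guu, guub, gubub, gring]
  set b := pd2 φ p
  set c := deriv Ψ p.1
  set aub := pd1 (pd2 φ) p
  set abb := pd2 (pd2 φ) p
  rw [eq_inv_mul_iff_mul_eq₀ (mul_ne_zero (pow_ne_zero 2 hr) hg0)]
  field_simp
  linear_combination (-1 / 2 : ℝ) * hred + (2 * aub - c ^ 2 * abb - 3 * b * c * aub) * hgdef
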